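/- arXiv:1807.07386 — 4 statements merged into one kernel-verified Lean document; each statement's English description precedes it below -/
import Mathlib

section
/- Let W : [t₀, T) → ℝ be differentiable with W(t₀) ≥ δ > 0, and suppose W'(t) ≥ C · W(t)² · (1+t)^(-1/2) for all t ∈ [t₀, T) with C > 0. Then T is finite; in fact T ≤ ((1 + t₀)^(1/2) + 1/(2Cδ))² - 1, so W cannot exist globally. -/
/-!
Along the solution `W` stays above `W t₀ > 0`, so `-1/W - G` is nondecreasing, where `G` is a
primitive of the coefficient `g` in `W' ≥ g W²`. Since `-1/W < 0`, the increment of `G` over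
`[t₀, t)` stays below `1/W t₀`. For `g = C (1+t)^(-1/2)` this increment is `2C(√(1+t) - √(1+t₀))`,
which is unbounded in `t`, so the interval of existence is bounded as stated.
-/

open Set

lemma monotoneOn_of_hasDerivAt_nonneg {D : Set ℝ} (hD : Convex ℝ D) {f f' : ℝ → ℝ}
    (hf : ∀ x ∈ D, HasDerivAt f (f' x) x) (hf'₀ : ∀ x ∈ D, 0 ≤ f' x) : MonotoneOn f D :=
  monotoneOn_of_hasDerivWithinAt_nonneg hD
    (fun x hx => (hf x hx).continuousAt.continuousWithinAt)
    (fun x hx => (hf x (interior_subset hx)).hasDerivWithinAt)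
    (fun x hx => hf'₀ x (interior_subset hx))

lemma sub_lt_inv_of_riccati {W W' G g : ℝ → ℝ} {a b : ℝ}
    (hW : ∀ t ∈ Ico a b, HasDerivAt W (W' t) t) (hG : ∀ t ∈ Ico a b, HasDerivAt G (g t) t)
    (hg : ∀ t ∈ Ico a b, 0 ≤ g t) (hineq : ∀ t ∈ Ico a b, g t * W t ^ 2 ≤ W' t)
    (ha : 0 < W a) {t : ℝ} (ht : t ∈ Ico a b) : G t - G a < (W a)⁻¹ := by
  have ha' : a ∈ Ico a b := ⟨le_rfl, ht.1.trans_lt ht.2⟩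
  have hW_mono : MonotoneOn W (Ico a b) :=
    monotoneOn_of_hasDerivAt_nonneg (convex_Ico a b) hW fun s hs =>
      (mul_nonneg (hg s hs) (sq_nonneg _)).trans (hineq s hs)
  have hW_pos : ∀ s ∈ Ico a b, 0 < W s := fun s hs => ha.trans_le (hW_mono ha' hs hs.1)
  have hF_mono : MonotoneOn (fun s => -(W s)⁻¹ - G s) (Ico a b) := by
    refine monotoneOn_of_hasDerivAt_nonneg (f' := fun s => W' s / W s ^ 2 - g s)
      (convex_Ico a b) (fun s hs => ?_) (fun s hs => ?_)
    · exact (((hW s hs).inv (hW_pos s hs).ne').neg.congr_deriv (by ring)).sub (hG s hs)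
    · rw [sub_nonneg, le_div_iff₀ (pow_pos (hW_pos s hs) 2)]
      exact hineq s hs
  have hF : -(W a)⁻¹ - G a ≤ -(W t)⁻¹ - G t := hF_mono ha' ht ht.1
  linarith [inv_pos.2 (hW_pos t ht)]

lemma hasDerivAt_const_mul_sqrt_one_add (C : ℝ) {t : ℝ} (ht : 0 < 1 + t) :
    HasDerivAt (fun s => 2 * C * √(1 + s)) (C / √(1 + t)) t := by
  have h := (((hasDerivAt_id' t).const_add 1).sqrt ht.ne').const_mul (2 * C)
  exact h.congr_deriv (by field_simp)

theorem stmt_0_general (W W' : ℝ → ℝ) (t₀ T δ C : ℝ)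
    (ht₀ : 0 ≤ t₀) (hδ : 0 < δ) (hC : 0 < C)
    (hW0 : W t₀ ≥ δ)
    (hderiv : ∀ t ∈ Set.Ico t₀ T, HasDerivAt W (W' t) t)
    (hineq : ∀ t ∈ Set.Ico t₀ T, W' t ≥ C * (W t) ^ 2 / Real.sqrt (1 + t)) :
    T ≤ (Real.sqrt (1 + t₀) + 1 / (2 * C * δ)) ^ 2 - 1 := by
  set S := Real.sqrt (1 + t₀) + 1 / (2 * C * δ)
  have hpos : ∀ t ∈ Ico t₀ T, 0 < 1 + t := fun t ht => by linarith [ht.1]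
  have hsqrt_lt : ∀ t ∈ Ico t₀ T, √(1 + t) < S := by
    intro t ht
    have h := sub_lt_inv_of_riccati hderiv
      (fun s hs => hasDerivAt_const_mul_sqrt_one_add C (hpos s hs))
      (fun s hs => by positivity) (fun s hs => by rw [div_mul_eq_mul_div]; exact hineq s hs)
      (hδ.trans_le hW0) ht
    have hinv : (W t₀)⁻¹ ≤ δ⁻¹ := inv_anti₀ hδ hW0
    have hS : 2 * C * S = 2 * C * √(1 + t₀) + δ⁻¹ := by
      simp only [S]; field_simp
    nlinarith
  have ht₀S : √(1 + t₀) < S := lt_add_of_pos_right _ (by positivity)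
  by_contra! hT
  have hS_mem : S ^ 2 - 1 ∈ Ico t₀ T := by
    refine ⟨?_, hT⟩
    nlinarith [Real.sq_sqrt (show 0 ≤ 1 + t₀ by linarith), Real.sqrt_nonneg (1 + t₀)]
  have := hsqrt_lt _ hS_mem
  rw [add_sub_cancel, Real.sqrt_sq (by positivity)] at this
  exact lt_irrefl _ this

/-- Riccati blow-up with coefficient (1+t)^(-1/2): explicit bound on T. -/
theorem stmt_0 (W W' : ℝ → ℝ) (t₀ T δ C : ℝ)
    (ht₀ : 0 ≤ t₀) (hT : t₀ < T) (hδ : 0 < δ) (hC : 0 < C)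
    (hW0 : W t₀ ≥ δ)
    (hderiv : ∀ t ∈ Set.Ico t₀ T, HasDerivAt W (W' t) t)
    (hineq : ∀ t ∈ Set.Ico t₀ T, W' t ≥ C * (W t) ^ 2 / Real.sqrt (1 + t)) :
    T ≤ (Real.sqrt (1 + t₀) + 1 / (2 * C * δ)) ^ 2 - 1 :=
  stmt_0_general W W' t₀ T δ C ht₀ hδ hC hW0 hderiv hineq
end

section
/- Let X, Y : [0, ∞) → ℝ be C¹ functions satisfying X'(t) = Y(t) and Y'(t) ≥ X(t) for all t ≥ 0, with X(0) ≥ 0 and Y(0) ≥ 0. Define Z by e^t Z(t) = ∫₀^t Y(τ) dτ. Then Z(t) ≥ 0 and Z'(t) ≥ 0 for all t ≥ 0. -/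
open Set Real intervalIntegral

/-!
Put `W t = ∫₀ᵗ Y`. Since `X' = Y = W'`, the difference `X - W` is constant, so `W ≤ X` as `X 0 ≥ 0`.
Then `U = Y - W` satisfies `U' = Y' - Y ≥ X - Y ≥ -U`, so `eᵗ U = e^{2t} Z'` is nondecreasing from
`U 0 = Y 0 ≥ 0`. Hence `Z' = e^{-t} U ≥ 0`, and `Z` increases from `Z 0 = 0`.
-/

section Ici

variable {f f' : ℝ → ℝ} {a : ℝ}

theorem monotoneOn_Ici_of_hasDerivWithinAt_nonneg
    (hf : ∀ t ∈ Ici a, HasDerivWithinAt f (f' t) (Ici a) t) (hf' : ∀ t ∈ Ioi a, 0 ≤ f' t) :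
    MonotoneOn f (Ici a) := by
  refine monotoneOn_of_hasDerivWithinAt_nonneg (convex_Ici a)
    (fun t ht => (hf t ht).continuousWithinAt) (fun t ht => ?_) (by rwa [interior_Ici])
  rw [interior_Ici] at ht ⊢
  exact (hf t (mem_Ici.2 (le_of_lt ht))).mono Ioi_subset_Ici_self

/-- At `t = a` the function need not be differentiable; then `deriv f a = 0` by convention. -/
theorem deriv_nonneg_of_hasDerivWithinAt_Ici {t d : ℝ} (hf : HasDerivWithinAt f d (Ici a) t)
    (ht : t ∈ Ici a) (hd : 0 ≤ d) : 0 ≤ deriv f t := by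
  by_cases hdiff : DifferentiableAt ℝ f t
  · rwa [← hdiff.derivWithin (uniqueDiffOn_Ici a t ht), hf.derivWithin (uniqueDiffOn_Ici a t ht)]
  · rw [deriv_zero_of_not_differentiableAt hdiff]

theorem hasDerivWithinAt_integral_Ici (hf : ContinuousOn f (Ici a)) {t : ℝ} (ht : t ∈ Ici a) :
    HasDerivWithinAt (fun u => ∫ x in a..u, f x) (f t) (Ici a) t := by
  have hint : IntervalIntegrable f MeasureTheory.volume a t :=
    (hf.mono (uIcc_of_le (mem_Ici.1 ht) ▸ Icc_subset_Ici_self)).intervalIntegrable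
  obtain rfl | hlt := (mem_Ici.1 ht).eq_or_lt
  · exact integral_hasDerivWithinAt_right hint
      ((hf.mono Ioi_subset_Ici_self).stronglyMeasurableAtFilter_nhdsWithin measurableSet_Ioi a)
      ((hf a self_mem_Ici).mono Ioi_subset_Ici_self)
  · exact (integral_hasDerivAt_right hint
      ((hf.mono Ioi_subset_Ici_self).stronglyMeasurableAtFilter isOpen_Ioi t hlt)
      ((hf t ht).continuousAt (Ici_mem_nhds hlt))).hasDerivWithinAt

end Ici

theorem integral_le_of_hasDerivAt_of_deriv_ge {X Y Y' : ℝ → ℝ} {a : ℝ}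
    (hX : ∀ t ≥ a, HasDerivAt X (Y t) t) (hY : ∀ t ≥ a, HasDerivAt Y (Y' t) t)
    (hineq : ∀ t ≥ a, X t ≤ Y' t) (hXa : 0 ≤ X a) (hYa : 0 ≤ Y a) :
    ∀ t ≥ a, ∫ τ in a..t, Y τ ≤ Y t := by
  set W : ℝ → ℝ := fun t => ∫ τ in a..t, Y τ
  have hW : ∀ t ∈ Ici a, HasDerivWithinAt W (Y t) (Ici a) t := fun t ht =>
    hasDerivWithinAt_integral_Ici (fun s hs => (hY s hs).continuousAt.continuousWithinAt) ht
  have hW_le_X : ∀ t ≥ a, W t ≤ X t := by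
    have hmono : MonotoneOn (fun t => X t - W t) (Ici a) :=
      monotoneOn_Ici_of_hasDerivWithinAt_nonneg (f' := 0)
        (fun t ht => by simpa using (hX t ht).hasDerivWithinAt.fun_sub (hW t ht)) (fun _ _ => le_rfl)
    intro t ht
    have := hmono self_mem_Ici ht ht
    simp only [W, integral_same, sub_zero] at this
    linarith
  have hmono : MonotoneOn (fun t => exp t * (Y t - W t)) (Ici a) :=
    monotoneOn_Ici_of_hasDerivWithinAt_nonneg (f' := fun t => exp t * (Y' t - W t))
      (fun t ht => ((hasDerivAt_exp t).hasDerivWithinAt.fun_mul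
        ((hY t ht).hasDerivWithinAt.fun_sub (hW t ht))).congr_deriv (by ring))
      (fun t ht => mul_nonneg (exp_pos t).le
        (by linarith [hineq t (le_of_lt ht), hW_le_X t (le_of_lt ht)]))
  intro t ht
  have h : exp a * Y a ≤ exp t * (Y t - W t) := by
    simpa only [W, integral_same, sub_zero] using hmono self_mem_Ici ht ht
  have : 0 ≤ exp t * (Y t - W t) := (mul_nonneg (exp_pos a).le hYa).trans h
  exact sub_nonneg.1 ((mul_nonneg_iff_of_pos_left (exp_pos t)).1 this)

/-- For X' = Y, Y' ≥ X with nonnegative data, Z(t) = e^{-t} ∫₀ᵗ Y satisfies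
Z ≥ 0 and Z' ≥ 0 on [0,∞). -/
theorem stmt_4 (X Y Y' Z : ℝ → ℝ)
    (hX : ∀ t ≥ (0:ℝ), HasDerivAt X (Y t) t)
    (hY : ∀ t ≥ (0:ℝ), HasDerivAt Y (Y' t) t)
    (hineq : ∀ t ≥ (0:ℝ), Y' t ≥ X t)
    (hX0 : X 0 ≥ 0) (hY0 : Y 0 ≥ 0)
    (hZ : ∀ t, Real.exp t * Z t = ∫ τ in (0:ℝ)..t, Y τ) :
    ∀ t ≥ (0:ℝ), 0 ≤ Z t ∧ 0 ≤ deriv Z t := by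
  set W : ℝ → ℝ := fun t => ∫ τ in (0:ℝ)..t, Y τ
  have hZW : Z = fun t => exp (-t) * W t := funext fun t => by
    rw [exp_neg, eq_inv_mul_iff_mul_eq₀ (exp_pos t).ne', hZ]
  have hZ' : ∀ t ∈ Ici (0:ℝ), HasDerivWithinAt Z (exp (-t) * (Y t - W t)) (Ici 0) t :=
    fun t ht => by
      rw [hZW]
      exact ((hasDerivAt_neg t).exp.hasDerivWithinAt.fun_mul (hasDerivWithinAt_integral_Ici
        (fun s hs => (hY s hs).continuousAt.continuousWithinAt) ht)).congr_deriv (by ring)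
  have hZ'_nonneg : ∀ t ∈ Ici (0:ℝ), 0 ≤ exp (-t) * (Y t - W t) := fun t ht =>
    mul_nonneg (exp_pos _).le
      (sub_nonneg.2 (integral_le_of_hasDerivAt_of_deriv_ge hX hY hineq hX0 hY0 t ht))
  intro t ht
  refine ⟨?_, deriv_nonneg_of_hasDerivWithinAt_Ici (hZ' t ht) ht (hZ'_nonneg t ht)⟩
  calc 0 = Z 0 := by simp [hZW, W]
    _ ≤ Z t := monotoneOn_Ici_of_hasDerivWithinAt_nonneg hZ'
      (fun s hs => hZ'_nonneg s (mem_Ici.2 (le_of_lt hs))) self_mem_Ici ht ht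
end

section
/- For every t ≥ 0 and every constant C₁ ≥ 1, ∫_{|y| ≤ t + C₁} (e^y + e^{-y}) · sqrt((t+C₁)² − y²) dy ≤ C (t+1)^{1/2} e^t for a constant C depending only on C₁. -/
/-!
The substitution `y ↦ -y` swaps the two exponentials, so the integral is twice
`∫_{-a}^{a} e^y √(a² - y²) dy` with `a = t + C₁`. Writing `√(a² - y²) = √(a - y) √(a + y)`,
bound `√(a + y) ≤ √(2a)` and `√(a - y) ≤ (1 + a - y) / 2`; the resulting integrand
`e^y (1 + a - y)` has the explicit primitive `e^y (2 + a - y)`, giving the bound `2√(2a) e^a`.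
Finally `2(t + C₁) ≤ 2C₁ (t + 1)` because `C₁ ≥ 1`.
-/

open Real Set intervalIntegral

lemma Real.sqrt_le_one_add_div_two {x : ℝ} (hx : 0 ≤ x) : √x ≤ (1 + x) / 2 := by
  nlinarith [sq_sqrt hx, sq_nonneg (√x - 1)]

lemma sqrt_sq_sub_sq_le_of_mem_Icc {a y : ℝ} (hy : y ∈ Icc (-a) a) :
    √(a ^ 2 - y ^ 2) ≤ √(2 * a) * ((1 + a - y) / 2) := by
  obtain ⟨hay, hya⟩ := hy
  calc √(a ^ 2 - y ^ 2) = √(a - y) * √(a + y) := by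
        rw [← sqrt_mul (by linarith)]; ring_nf
    _ ≤ (1 + a - y) / 2 * √(2 * a) :=
        mul_le_mul ((sqrt_le_one_add_div_two (by linarith)).trans_eq (by ring))
          (sqrt_le_sqrt (by linarith)) (sqrt_nonneg _) (by linarith)
    _ = √(2 * a) * ((1 + a - y) / 2) := mul_comm _ _

lemma integral_exp_mul_one_add_sub (a : ℝ) :
    ∫ y in -a..a, exp y * (1 + a - y) = 2 * exp a - 2 * (1 + a) * exp (-a) := by
  have hderiv (y : ℝ) : HasDerivAt (fun y => exp y * (2 + a - y)) (exp y * (1 + a - y)) y :=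
    ((hasDerivAt_exp y).mul ((hasDerivAt_id' y).const_sub (2 + a))).congr_deriv (by ring)
  rw [integral_eq_sub_of_hasDerivAt (fun y _ => hderiv y)
    (Continuous.intervalIntegrable (by fun_prop) _ _)]
  ring

lemma integral_exp_mul_sqrt_sq_sub_sq_le {a : ℝ} (ha : 0 ≤ a) :
    ∫ y in -a..a, exp y * √(a ^ 2 - y ^ 2) ≤ √(2 * a) * exp a := by
  calc ∫ y in -a..a, exp y * √(a ^ 2 - y ^ 2)
      ≤ ∫ y in -a..a, √(2 * a) / 2 * (exp y * (1 + a - y)) := by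
        refine integral_mono_on (by linarith)
          (Continuous.intervalIntegrable (by fun_prop) _ _)
          (Continuous.intervalIntegrable (by fun_prop) _ _) fun y hy => ?_
        calc exp y * √(a ^ 2 - y ^ 2) ≤ exp y * (√(2 * a) * ((1 + a - y) / 2)) := by
              gcongr; exact sqrt_sq_sub_sq_le_of_mem_Icc hy
          _ = _ := by ring
    _ = √(2 * a) * exp a - √(2 * a) * (1 + a) * exp (-a) := by
        rw [integral_const_mul, integral_exp_mul_one_add_sub]; ring
    _ ≤ √(2 * a) * exp a := by
        have : 0 ≤ √(2 * a) * (1 + a) * exp (-a) := by positivity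
        linarith

lemma integral_exp_add_exp_neg_mul_sqrt_sq_sub_sq (a : ℝ) :
    ∫ y in -a..a, (exp y + exp (-y)) * √(a ^ 2 - y ^ 2)
      = 2 * ∫ y in -a..a, exp y * √(a ^ 2 - y ^ 2) := by
  have hmirror : ∫ y in -a..a, exp (-y) * √(a ^ 2 - y ^ 2)
      = ∫ y in -a..a, exp y * √(a ^ 2 - y ^ 2) := by
    have := integral_comp_neg (a := -a) (b := a) fun y => exp y * √(a ^ 2 - y ^ 2)
    simpa only [neg_neg, neg_sq] using this
  simp only [add_mul]
  rw [integral_add (Continuous.intervalIntegrable (by fun_prop) _ _)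
    (Continuous.intervalIntegrable (by fun_prop) _ _), hmirror]
  ring

lemma sqrt_two_mul_add_le {C₁ t : ℝ} (hC₁ : 1 ≤ C₁) (ht : 0 ≤ t) :
    √(2 * (t + C₁)) ≤ √(2 * C₁) * √(t + 1) := by
  rw [← sqrt_mul (by linarith)]
  exact sqrt_le_sqrt (by nlinarith)

/-- Weighted-volume estimate (3.23): the slab integral is ≲ (t+1)^{1/2} e^t. -/
theorem stmt_6 (C₁ : ℝ) (hC₁ : 1 ≤ C₁) :
    ∃ C > 0, ∀ t ≥ (0:ℝ),
      (∫ y in (-(t + C₁))..(t + C₁),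
          (Real.exp y + Real.exp (-y)) * Real.sqrt ((t + C₁) ^ 2 - y ^ 2))
        ≤ C * Real.sqrt (t + 1) * Real.exp t := by
  refine ⟨2 * √(2 * C₁) * exp C₁, by positivity, fun t ht => ?_⟩
  rw [integral_exp_add_exp_neg_mul_sqrt_sq_sub_sq]
  calc 2 * ∫ y in -(t + C₁)..t + C₁, exp y * √((t + C₁) ^ 2 - y ^ 2)
      ≤ 2 * (√(2 * (t + C₁)) * exp (t + C₁)) := by
        gcongr; exact integral_exp_mul_sqrt_sq_sub_sq_le (by linarith)
    _ ≤ 2 * (√(2 * C₁) * √(t + 1) * exp (t + C₁)) := by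
        gcongr; exact sqrt_two_mul_add_le hC₁ ht
    _ = 2 * √(2 * C₁) * exp C₁ * √(t + 1) * exp t := by
        rw [exp_add]; ring
end

section
/- Suppose ρ_m > ρ_r > 0, u_r < 0, u_m = 0, and σ₊ satisfies the Rankine–Hugoniot conditions σ₊(ρ_r − ρ_m) = ρ_r u_r and σ₊ ρ_r u_r = ρ_r u_r² + ρ_r − ρ_m (isothermal pressure p = ρ). Then u_r + 1 < σ₊ < 1. -/
/-!
Eliminating `ρr * ur` between the two Rankine–Hugoniot conditions and cancelling `ρr - ρm ≠ 0`
leaves `σ * (σ - ur) = 1`. The first condition also gives `σ > 0`, so `σ - ur = 1 / σ` with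
`σ < σ - ur`; hence `σ < 1 < σ - ur`.
-/

lemma shock_speed_mul_sub_eq_one {K : Type*} [Field K] {ρm ρr ur σ : K} (hne : ρr ≠ ρm)
    (hRH1 : σ * (ρr - ρm) = ρr * ur)
    (hRH2 : σ * (ρr * ur) = ρr * ur ^ 2 + ρr - ρm) :
    σ * (σ - ur) = 1 := by
  have hsub : ρr - ρm ≠ 0 := sub_ne_zero.mpr hne
  apply mul_right_cancel₀ hsub
  linear_combination (σ - ur) * hRH1 + hRH2

lemma shock_speed_pos {K : Type*} [CommRing K] [LinearOrder K] [IsStrictOrderedRing K]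
    {ρm ρr ur σ : K} (hρ : ρr < ρm) (hρr : 0 < ρr) (hur : ur < 0)
    (hRH1 : σ * (ρr - ρm) = ρr * ur) : 0 < σ := by
  have hflux : ρr * ur < 0 := mul_neg_of_pos_of_neg hρr hur
  rw [← hRH1] at hflux
  exact pos_of_mul_neg_left hflux (by linarith)

lemma lt_one_lt_sub_of_mul_sub_eq_one {K : Type*} [CommRing K] [LinearOrder K]
    [IsStrictOrderedRing K] {ur σ : K} (hσ : 0 < σ) (hur : ur < 0)
    (h : σ * (σ - ur) = 1) : σ < 1 ∧ 1 < σ - ur := by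
  constructor <;> nlinarith

/-- Lax entropy inequality for the right (3-)shock: u_r + 1 < σ₊ < 1. -/
theorem stmt_11 (ρm ρr ur σ : ℝ)
    (h1 : ρm > ρr) (h2 : 0 < ρr) (h3 : ur < 0)
    (hRH1 : σ * (ρr - ρm) = ρr * ur)
    (hRH2 : σ * (ρr * ur) = ρr * ur ^ 2 + ρr - ρm) :
    ur + 1 < σ ∧ σ < 1 := by
  have hσ : 0 < σ := shock_speed_pos h1 h2 h3 hRH1
  have hquad : σ * (σ - ur) = 1 := shock_speed_mul_sub_eq_one h1.ne hRH1 hRH2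
  obtain ⟨hlt, hgt⟩ := lt_one_lt_sub_of_mul_sub_eq_one hσ h3 hquad
  exact ⟨by linarith, hlt⟩
end
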